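/- arXiv:1407.7474 — 2 statements merged into one kernel-verified Lean document; each statement's English description precedes it below -/
import Mathlib

section
/- Let G be a countable nonamenable group which is inner amenable. Then every nonamenable subgroup of G is wq-normal in G. -/
open Pointwise

/-- A mean on `X`: a finitely additive probability measure defined on all subsets of `X`. -/
structure Mean (X : Type*) where
  m : Set X → ℝ
  nonneg : ∀ A : Set X, 0 ≤ m A
  total : m Set.univ = 1
  fin_add : ∀ A B : Set X, Disjoint A B → m (A ∪ B) = m A + m B

/-- A mean on a `G`-set `X` is invariant if it is preserved by the action of every `g ∈ G`. -/
def MeanInvariant (G : Type*) [Group G] {X : Type*} [MulAction G X] (m : Mean X) : Prop :=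
  ∀ (g : G) (A : Set X), m.m ((fun x => g • x) '' A) = m.m A

/-- The action of `G` on `X` is amenable: there is a `G`-invariant mean on `X`. -/
def AmenableAction (G : Type*) [Group G] (X : Type*) [MulAction G X] : Prop :=
  ∃ m : Mean X, MeanInvariant G m

/-- A group is amenable if its left translation action on itself admits an invariant mean. -/
def AmenableGroup (G : Type*) [Group G] : Prop :=
  ∃ m : Mean G, ∀ (g : G) (A : Set G), m.m ((fun x => g * x) '' A) = m.m A

/-- `H` is `L`-q-normal in `M` if `{g ∈ M : gHg⁻¹ ∩ H ∈ L}` generates `M`. -/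
def IsLQNormal {G : Type*} [Group G] (L : Subgroup G → Prop) (H M : Subgroup G) : Prop :=
  H ≤ M ∧
    Subgroup.closure
      {g : G | g ∈ M ∧ L (Subgroup.map (MulAut.conj g).toMonoidHom H ⊓ H)} = M

/-- `H` is `L`-wq-normal in `M`: there is an increasing ordinal-indexed chain from `H` to `M`
whose unions of initial segments are `L`-q-normal at every stage. -/
def IsLWQNormal {G : Type*} [Group G] (L : Subgroup G → Prop) (H M : Subgroup G) : Prop :=
  ∃ (lam : Ordinal.{0}) (c : Ordinal.{0} → Subgroup G),
    (∀ α β : Ordinal.{0}, α ≤ β → β ≤ lam → c α ≤ c β) ∧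
    c 0 = H ∧ c lam = M ∧
    ∀ α : Ordinal.{0}, 0 < α → α ≤ lam →
      IsLQNormal L (⨆ (β : Ordinal.{0}) (_ : β < α), c β) (c α)

/-- q*-normality: `{g ∈ M : gHg⁻¹ ∩ H nonamenable}` generates `M`. -/
def IsQStarNormal {G : Type*} [Group G] (H M : Subgroup G) : Prop :=
  IsLQNormal (fun K => ¬ AmenableGroup ↥K) H M

/-- wq*-normality. -/
def IsWQStarNormal {G : Type*} [Group G] (H M : Subgroup G) : Prop :=
  IsLWQNormal (fun K => ¬ AmenableGroup ↥K) H M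

/-- q-normality: `{g ∈ M : gHg⁻¹ ∩ H infinite}` generates `M`. -/
def IsQNormal {G : Type*} [Group G] (H M : Subgroup G) : Prop :=
  IsLQNormal (fun K => ((K : Set G)).Infinite) H M

/-- wq-normality. -/
def IsWQNormal {G : Type*} [Group G] (H M : Subgroup G) : Prop :=
  IsLWQNormal (fun K => ((K : Set G)).Infinite) H M

/-- `n`-degree `L`-wq-normality in `G`: `L₀ = L`, `L_{n+1} = {H : H is Lₙ-wq-normal in G}`. -/
def NDegLWQNormal {G : Type*} [Group G] (L : Subgroup G → Prop) : ℕ → Subgroup G → Prop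
  | 0, H => L H
  | n + 1, H => IsLWQNormal (NDegLWQNormal L n) H ⊤

/-- The isoperimetric constant `φ_S(X)` of a `G`-set `X` with respect to a finite `S ⊆ G`. -/
noncomputable def phiConst {G : Type*} [Group G] (S : Finset G) (X : Type*) [MulAction G X] :
    ℝ :=
  sInf {r : ℝ | ∃ P : Finset X, P.Nonempty ∧
    r = (∑ s ∈ S, (((s • (P : Set X)) \ (P : Set X)).ncard : ℝ)) / (P.card : ℝ)}


/-- `G` is inner amenable: there is an atomless mean on `G` invariant under conjugation. -/
def InnerAmenable (G : Type*) [Group G] : Prop :=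
  ∃ m : Mean G, (∀ g : G, m.m {g} = 0) ∧
    ∀ (g : G) (A : Set G), m.m ((fun x => g * x * g⁻¹) '' A) = m.m A

/-!
Let `m` be an atomless conjugation-invariant mean on `G`. The set of `g` with `gHg⁻¹ ∩ H` finite
is `m`-null: otherwise `H` would act by conjugation on it with finite stabilizers (the centralizer
in `H` of such a `g` lies in `gHg⁻¹ ∩ H`) and an invariant mean, and integrating the uniform means
on the finite cosets of stabilizers against it gives an invariant mean on `H`. So the subgroup `K`
generated by the `g` with `gHg⁻¹ ∩ H` infinite has `m K = 1`; then `gKg⁻¹ ∩ K` has measure `1`,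
hence is infinite, for every `g`. Thus `H` is q-normal in `K` and `K` is q-normal in `G`.
-/

open Filter Topology

theorem range_prodMk_subset_product {α β γ : Type*} {f : α → β} {g : α → γ}
    (hf : (Set.range f).Finite) (hg : (Set.range g).Finite) :
    Set.range (fun x => (f x, g x)) ⊆ (hf.toFinset ×ˢ hg.toFinset : Finset (β × γ)) := by
  rintro _ ⟨x, rfl⟩
  simp

theorem finite_range_add {α β : Type*} [Add β] {f g : α → β} (hf : (Set.range f).Finite)
    (hg : (Set.range g).Finite) : (Set.range (f + g)).Finite :=
  (hf.image2 (· + ·) hg).subset <| Set.range_subset_iff.mpr fun x =>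
    Set.mem_image2_of_mem ⟨x, rfl⟩ ⟨x, rfl⟩

noncomputable def floorApprox {X : Type*} (n : ℕ) (f : X → ℝ) (x : X) : ℝ :=
  ⌊(n + 1 : ℝ) * f x⌋ / (n + 1)

section FloorApprox

variable {X : Type*} {C : ℝ} {f g : X → ℝ} (n : ℕ) (x : X)

theorem floorApprox_le : floorApprox n f x ≤ f x := by
  rw [floorApprox, div_le_iff₀' (by positivity)]
  exact Int.floor_le _

theorem lt_floorApprox_add : f x < floorApprox n f x + 1 / (n + 1) := by
  rw [floorApprox, ← add_div, lt_div_iff₀' (by positivity)]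
  exact Int.lt_floor_add_one _

theorem floorApprox_add_le :
    floorApprox n f x + floorApprox n g x ≤ floorApprox n (f + g) x := by
  rw [floorApprox, floorApprox, floorApprox, ← add_div, Pi.add_apply, mul_add]
  gcongr
  exact_mod_cast Int.le_floor_add _ _

theorem floorApprox_le_add :
    floorApprox n (f + g) x ≤ floorApprox n f x + floorApprox n g x + 1 / (n + 1) := by
  rw [floorApprox, floorApprox, floorApprox, ← add_div, ← add_div, Pi.add_apply, mul_add]
  gcongr
  have := (Int.cast_le (R := ℝ)).mpr
    (Int.le_floor_add_floor ((n + 1 : ℝ) * f x) ((n + 1) * g x))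
  push_cast at this
  linarith

theorem finite_range_floorApprox (hf : ∀ x, |f x| ≤ C) :
    (Set.range (floorApprox n f)).Finite := by
  refine ((Set.finite_Icc ⌊(n + 1 : ℝ) * -C⌋ ⌊(n + 1 : ℝ) * C⌋).image
    fun k : ℤ => (k : ℝ) / (n + 1)).subset ?_
  rintro _ ⟨x, rfl⟩
  obtain ⟨h₁, h₂⟩ := abs_le.mp (hf x)
  exact ⟨_, ⟨Int.floor_mono (by gcongr), Int.floor_mono (by gcongr)⟩, rfl⟩

end FloorApprox

namespace Mean

variable {X : Type*} (m : Mean X)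

theorem m_empty : m.m ∅ = 0 := by
  have := m.fin_add ∅ ∅ disjoint_bot_left
  rw [Set.empty_union] at this
  linarith

theorem m_eq_add_diff {A B : Set X} (h : A ⊆ B) : m.m B = m.m A + m.m (B \ A) := by
  rw [← m.fin_add _ _ Set.disjoint_sdiff_right, Set.union_sdiff_cancel h]

theorem m_mono {A B : Set X} (h : A ⊆ B) : m.m A ≤ m.m B := by
  linarith [m.m_eq_add_diff h, m.nonneg (B \ A)]

theorem m_le_one (A : Set X) : m.m A ≤ 1 :=
  m.total ▸ m.m_mono (Set.subset_univ A)

theorem m_compl (A : Set X) : m.m Aᶜ = 1 - m.m A := by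
  rw [Set.compl_eq_univ_sdiff, ← m.total, m.m_eq_add_diff (Set.subset_univ A)]
  ring

theorem add_le_one_add_m_inter (A B : Set X) : m.m A + m.m B ≤ 1 + m.m (A ∩ B) := by
  have hB : m.m B = m.m (A ∩ B) + m.m (B \ A) := by
    rw [← Set.sdiff_inter_self_eq_sdiff]
    exact m.m_eq_add_diff Set.inter_subset_right
  have hAB : m.m (A ∪ B) = m.m A + m.m (B \ A) := by
    rw [← m.fin_add _ _ Set.disjoint_sdiff_right, Set.union_sdiff_self]
  linarith [m.m_le_one (A ∪ B)]

theorem m_eq_zero_of_finite (hat : ∀ x, m.m {x} = 0) {A : Set X} (hA : A.Finite) :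
    m.m A = 0 := by
  induction A, hA using Set.Finite.induction_on with
  | empty => exact m.m_empty
  | @insert a A ha _ ih =>
    rw [Set.insert_eq, m.fin_add _ _ (Set.disjoint_singleton_left.mpr ha), hat, ih, add_zero]

theorem m_biUnion {ι : Type*} (s : Finset ι) {P : ι → Set X}
    (hP : (s : Set ι).PairwiseDisjoint P) : m.m (⋃ i ∈ s, P i) = ∑ i ∈ s, m.m (P i) := by
  classical
  induction s using Finset.induction_on with
  | empty => simp [m.m_empty]
  | insert a s ha ih =>
    rw [Finset.coe_insert] at hP
    rw [Finset.set_biUnion_insert, Finset.sum_insert ha, ← ih (hP.subset (Set.subset_insert _ _)),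
      m.fin_add]
    exact Set.disjoint_iUnion₂_right.mpr fun i hi =>
      hP (Set.mem_insert a _) (Set.mem_insert_of_mem a hi) (ne_of_mem_of_not_mem hi ha).symm

open scoped Classical in
noncomputable def simpleIntegral (f : X → ℝ) : ℝ :=
  if hf : (Set.range f).Finite then ∑ c ∈ hf.toFinset, c * m.m (f ⁻¹' {c}) else 0

theorem simpleIntegral_eq_sum {f : X → ℝ} {s : Finset ℝ} (hs : Set.range f ⊆ s) :
    m.simpleIntegral f = ∑ c ∈ s, c * m.m (f ⁻¹' {c}) := by
  have hf : (Set.range f).Finite := s.finite_toSet.subset hs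
  rw [simpleIntegral, dif_pos hf]
  refine Finset.sum_subset (fun c hc => hs (hf.mem_toFinset.mp hc)) fun c _ hc => ?_
  rw [Set.preimage_singleton_eq_empty.mpr fun h => hc (hf.mem_toFinset.mpr h), m.m_empty,
    mul_zero]

theorem simpleIntegral_comp_eq_sum {ι : Type*} {q : X → ι} {t : Finset ι}
    (ht : Set.range q ⊆ t) (v : ι → ℝ) :
    m.simpleIntegral (v ∘ q) = ∑ i ∈ t, v i * m.m (q ⁻¹' {i}) := by
  classical
  rw [m.simpleIntegral_eq_sum (s := t.image v) ?_]
  · refine Finset.sum_image' _ fun i _ => ?_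
    have hfib : (v ∘ q) ⁻¹' {v i} = ⋃ j ∈ t.filter (v · = v i), q ⁻¹' {j} := by
      ext x
      simp only [Set.mem_preimage, Function.comp_apply, Set.mem_singleton_iff, Set.mem_iUnion,
        Finset.mem_filter, exists_prop]
      exact ⟨fun h => ⟨q x, ⟨ht ⟨x, rfl⟩, h⟩, rfl⟩, by rintro ⟨j, ⟨-, hj⟩, rfl⟩; exact hj⟩
    rw [hfib, m.m_biUnion _ fun j _ k _ hjk => Set.disjoint_singleton.mpr hjk |>.preimage q,
      Finset.mul_sum]
    exact Finset.sum_congr rfl fun j hj => by rw [(Finset.mem_filter.mp hj).2]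
  · rintro _ ⟨x, rfl⟩
    exact Finset.mem_image_of_mem v (ht ⟨x, rfl⟩)

theorem simpleIntegral_add {f g : X → ℝ} (hf : (Set.range f).Finite)
    (hg : (Set.range g).Finite) :
    m.simpleIntegral (f + g) = m.simpleIntegral f + m.simpleIntegral g := by
  have hfg := range_prodMk_subset_product hf hg
  have hf' : m.simpleIntegral f = _ := m.simpleIntegral_comp_eq_sum hfg Prod.fst
  have hg' : m.simpleIntegral g = _ := m.simpleIntegral_comp_eq_sum hfg Prod.snd
  rw [show f + g = (fun p : ℝ × ℝ => p.1 + p.2) ∘ fun x => (f x, g x) from rfl,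
    m.simpleIntegral_comp_eq_sum hfg, hf', hg', ← Finset.sum_add_distrib]
  simp only [add_mul]

theorem simpleIntegral_mono {f g : X → ℝ} (hf : (Set.range f).Finite)
    (hg : (Set.range g).Finite) (hfg : f ≤ g) : m.simpleIntegral f ≤ m.simpleIntegral g := by
  have hfg' := range_prodMk_subset_product hf hg
  have hf' : m.simpleIntegral f = _ := m.simpleIntegral_comp_eq_sum hfg' Prod.fst
  have hg' : m.simpleIntegral g = _ := m.simpleIntegral_comp_eq_sum hfg' Prod.snd
  rw [hf', hg']
  refine Finset.sum_le_sum fun p _ => ?_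
  rcases ((fun x => (f x, g x)) ⁻¹' {p}).eq_empty_or_nonempty with h | ⟨x, rfl⟩
  · simp [h, m.m_empty]
  · exact mul_le_mul_of_nonneg_right (hfg x) (m.nonneg _)

theorem simpleIntegral_const (c : ℝ) : m.simpleIntegral (fun _ => c) = c := by
  rw [m.simpleIntegral_eq_sum (s := {c}) (by simp), Finset.sum_singleton,
    Set.preimage_const_of_mem (Set.mem_singleton c), m.total, mul_one]

theorem simpleIntegral_comp_of_invariant {T : X → X} (hT : ∀ A, m.m (T ⁻¹' A) = m.m A)
    {f : X → ℝ} (hf : (Set.range f).Finite) : m.simpleIntegral (f ∘ T) = m.simpleIntegral f := by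
  rw [m.simpleIntegral_eq_sum (s := hf.toFinset) (by simpa using Set.range_comp_subset_range T f),
    m.simpleIntegral_eq_sum (s := hf.toFinset) (by simp)]
  simp only [Set.preimage_comp, hT]

local notation "𝓤" => ((Ultrafilter.of (atTop : Filter ℕ) : Ultrafilter ℕ) : Filter ℕ)

/-- The limit along an ultrafilter finer than `atTop` of the integrals of the discretizations
`floorApprox n f`: it exists for bounded `f` by compactness, and is additive since the
discretizations are additive up to `1 / (n + 1)`. -/
noncomputable def integral_s3 (f : X → ℝ) : ℝ :=
  limUnder 𝓤 fun n => m.simpleIntegral (floorApprox n f)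

section Integral

variable {C D : ℝ} {f g : X → ℝ}

theorem simpleIntegral_floorApprox_mem (hf : ∀ x, |f x| ≤ C) (n : ℕ) :
    m.simpleIntegral (floorApprox n f) ∈ Set.Icc (-(C + 1)) C := by
  have hr := finite_range_floorApprox n hf
  constructor
  · refine m.simpleIntegral_const (-(C + 1)) ▸
      m.simpleIntegral_mono Set.finite_range_const hr fun x => ?_
    have : (1 : ℝ) / (n + 1) ≤ 1 := div_le_one_of_le₀ (by simp) (by positivity)
    linarith [lt_floorApprox_add n x (f := f), neg_abs_le (f x), hf x]
  · exact m.simpleIntegral_const C ▸ m.simpleIntegral_mono hr Set.finite_range_const fun x =>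
      (floorApprox_le n x).trans ((le_abs_self _).trans (hf x))

theorem tendsto_simpleIntegral_floorApprox (hf : ∀ x, |f x| ≤ C) :
    Tendsto (fun n => m.simpleIntegral (floorApprox n f)) 𝓤 (𝓝 (m.integral_s3 f)) := by
  refine tendsto_nhds_limUnder ?_
  obtain ⟨a, -, ha⟩ := isCompact_Icc.ultrafilter_le_nhds
    (Ultrafilter.map (fun n => m.simpleIntegral (floorApprox n f)) (Ultrafilter.of atTop))
    (le_principal_iff.mpr (mem_map.mpr (univ_mem' (m.simpleIntegral_floorApprox_mem hf))))
  exact ⟨a, ha⟩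

theorem simpleIntegral_floorApprox_add_sub_mem (hf : ∀ x, |f x| ≤ C) (hg : ∀ x, |g x| ≤ D)
    (n : ℕ) :
    m.simpleIntegral (floorApprox n (f + g)) -
        (m.simpleIntegral (floorApprox n f) + m.simpleIntegral (floorApprox n g)) ∈
      Set.Icc 0 (1 / (n + 1) : ℝ) := by
  have hfg (x : X) : |(f + g) x| ≤ C + D := (abs_add_le _ _).trans (add_le_add (hf x) (hg x))
  have hrf := finite_range_floorApprox n hf
  have hrg := finite_range_floorApprox n hg
  have hrfg := finite_range_floorApprox n hfg
  have hsum := finite_range_add hrf hrg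
  rw [← m.simpleIntegral_add hrf hrg, Set.mem_Icc, sub_nonneg, sub_le_iff_le_add',
    ← m.simpleIntegral_const (1 / (n + 1) : ℝ), ← m.simpleIntegral_add hsum Set.finite_range_const]
  exact ⟨m.simpleIntegral_mono hsum hrfg fun x => floorApprox_add_le n x,
    m.simpleIntegral_mono hrfg (finite_range_add hsum Set.finite_range_const) fun x =>
      floorApprox_le_add n x⟩

theorem integral_add (hf : ∀ x, |f x| ≤ C) (hg : ∀ x, |g x| ≤ D) :
    m.integral_s3 (f + g) = m.integral_s3 f + m.integral_s3 g := by
  have hfg (x : X) : |(f + g) x| ≤ C + D := (abs_add_le _ _).trans (add_le_add (hf x) (hg x))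
  have herr : Tendsto (fun n => m.simpleIntegral (floorApprox n (f + g)) -
      (m.simpleIntegral (floorApprox n f) + m.simpleIntegral (floorApprox n g))) 𝓤 (𝓝 0) :=
    (squeeze_zero (fun n => (m.simpleIntegral_floorApprox_add_sub_mem hf hg n).1)
      (fun n => (m.simpleIntegral_floorApprox_add_sub_mem hf hg n).2)
      tendsto_one_div_add_atTop_nhds_zero_nat).mono_left (Ultrafilter.of_le _)
  have := herr.add ((m.tendsto_simpleIntegral_floorApprox hf).add
    (m.tendsto_simpleIntegral_floorApprox hg))
  simp only [sub_add_cancel, zero_add] at this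
  exact tendsto_nhds_unique (m.tendsto_simpleIntegral_floorApprox hfg) this

theorem integral_nonneg (hf : ∀ x, |f x| ≤ C) (h0 : 0 ≤ f) : 0 ≤ m.integral_s3 f := by
  refine ge_of_tendsto' (m.tendsto_simpleIntegral_floorApprox hf) fun n => ?_
  refine m.simpleIntegral_const 0 ▸ m.simpleIntegral_mono Set.finite_range_const
    (finite_range_floorApprox n hf) fun x => ?_
  have : 0 ≤ ⌊((n : ℝ) + 1) * f x⌋ := Int.floor_nonneg.mpr (mul_nonneg (by positivity) (h0 x))
  exact div_nonneg (Int.cast_nonneg_iff.mpr this) (by positivity)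

theorem integral_one : m.integral_s3 (fun _ => 1) = 1 := by
  have h (n : ℕ) : floorApprox n (fun _ : X => (1 : ℝ)) = fun _ => 1 := by
    ext x
    rw [floorApprox, mul_one, ← Nat.cast_succ, Int.floor_natCast, Int.cast_natCast,
      div_self (by positivity)]
  have := m.tendsto_simpleIntegral_floorApprox (f := fun _ => (1 : ℝ)) (C := 1) (by simp)
  simp only [h, simpleIntegral_const] at this
  exact tendsto_nhds_unique this tendsto_const_nhds

theorem integral_comp_of_invariant {T : X → X} (hT : ∀ A, m.m (T ⁻¹' A) = m.m A)
    (hf : ∀ x, |f x| ≤ C) : m.integral_s3 (f ∘ T) = m.integral_s3 f := by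
  simp only [integral_s3]
  congr 1
  ext n
  exact m.simpleIntegral_comp_of_invariant hT (finite_range_floorApprox n hf)

end Integral

variable {Y : Type*}

theorem abs_m_le_one (A : Set X) : |m.m A| ≤ 1 :=
  abs_le.mpr ⟨by linarith [m.nonneg A], m.m_le_one A⟩

noncomputable def bind (μ : X → Mean Y) : Mean Y where
  m A := m.integral_s3 fun x => (μ x).m A
  nonneg A := m.integral_nonneg (fun x => (μ x).abs_m_le_one A) fun x => (μ x).nonneg A
  total := by simp only [Mean.total, m.integral_one]
  fin_add A B h := by
    simp only [(μ _).fin_add A B h]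
    exact m.integral_add (fun x => (μ x).abs_m_le_one A) fun x => (μ x).abs_m_le_one B

noncomputable def uniform (s : Set Y) (hs : s.Finite) (hne : s.Nonempty) : Mean Y where
  m A := (s ∩ A).ncard / s.ncard
  nonneg _ := by positivity
  total := by
    rw [Set.inter_univ, div_self]
    exact_mod_cast (Set.ncard_pos hs).mpr hne |>.ne'
  fin_add A B h := by
    rw [Set.inter_union_distrib_left, Set.ncard_union_eq (h.mono Set.inter_subset_right
      Set.inter_subset_right) (hs.subset Set.inter_subset_left) (hs.subset Set.inter_subset_left),
      Nat.cast_add, add_div]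

noncomputable def restrict (B : Set X) (hB : 0 < m.m B) : Mean B where
  m A := m.m (Subtype.val '' A) / m.m B
  nonneg A := div_nonneg (m.nonneg _) hB.le
  total := by rw [Set.image_univ, Subtype.range_coe, div_self hB.ne']
  fin_add A A' h := by
    rw [Set.image_union, m.fin_add _ _ ((Set.disjoint_image_iff Subtype.val_injective).mpr h),
      add_div]

def map (f : X → Y) : Mean Y where
  m A := m.m (f ⁻¹' A)
  nonneg _ := m.nonneg _
  total := m.total
  fin_add _ _ h := m.fin_add _ _ (h.preimage f)

end Mean

section Invariance

variable {K X Y : Type*} [Group K] [MulAction K X] [MulAction K Y] {m : Mean X}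

theorem MeanInvariant.bind (hm : MeanInvariant K m) {μ : X → Mean Y}
    (hμ : ∀ (k : K) x A, (μ (k • x)).m (k • A) = (μ x).m A) : MeanInvariant K (m.bind μ) := by
  intro k A
  change m.integral_s3 (fun x => (μ x).m ((fun y => k • y) '' A)) = m.integral_s3 fun x => (μ x).m A
  have hcomp : (fun x => (μ x).m ((fun y => k • y) '' A)) =
      (fun x => (μ x).m A) ∘ fun x => k⁻¹ • x := by
    ext x
    rw [Set.image_smul, Function.comp_apply, ← hμ k (k⁻¹ • x) A, smul_inv_smul]
  rw [hcomp, m.integral_comp_of_invariant (fun B => ?_) fun x => (μ x).abs_m_le_one A]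
  rw [Set.preimage_smul_inv, ← Set.image_smul, hm]

theorem MeanInvariant.restrict (hm : MeanInvariant K m) (p : SubMulAction K X)
    (hp : 0 < m.m p) : MeanInvariant K (m.restrict p hp) := by
  intro k A
  change m.m (Subtype.val '' _) / _ = m.m (Subtype.val '' A) / _
  rw [Set.image_image, ← hm k (Subtype.val '' A), Set.image_image]
  rfl

theorem AmenableGroup.of_mulEquiv {K' : Type*} [Group K'] (e : K ≃* K') (h : AmenableGroup K) :
    AmenableGroup K' := by
  obtain ⟨m, hm⟩ := h
  refine ⟨m.map e, fun g A => ?_⟩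
  change m.m (e ⁻¹' _) = m.m (e ⁻¹' A)
  rw [← hm (e.symm g) (e ⁻¹' A)]
  congr 1
  ext x
  simp [Set.image_mul_left]

end Invariance

namespace MulAction

variable (K : Type*) {X : Type*} [Group K] [MulAction K X]

noncomputable def orbitRep (x : X) : X := (Quotient.mk (orbitRel K X) x).out

def transporter (x : X) : Set K := {k | k • orbitRep K x = x}

variable {K}

theorem orbitRep_smul (k : K) (x : X) : orbitRep K (k • x) = orbitRep K x :=
  congrArg Quotient.out (Quotient.sound (orbitRel_apply.mpr (mem_orbit x k)))

theorem transporter_nonempty (x : X) : (transporter K x).Nonempty := by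
  obtain ⟨k, hk⟩ := orbitRel_apply.mp (Quotient.mk_out (s := orbitRel K X) x)
  exact ⟨k⁻¹, inv_smul_eq_iff.mpr hk.symm⟩

theorem transporter_smul (k : K) (x : X) : transporter K (k • x) = k • transporter K x := by
  ext k'
  simp only [transporter, orbitRep_smul, Set.mem_ofPred_eq, Set.mem_smul_set_iff_inv_smul_mem,
    smul_eq_mul, mul_smul, inv_smul_eq_iff]

theorem transporter_subset_smul_stabilizer {x : X} {k₀ : K} (hk₀ : k₀ ∈ transporter K x) :
    transporter K x ⊆ k₀ • (stabilizer K (orbitRep K x) : Set K) := fun k hk => by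
  rw [Set.mem_smul_set_iff_inv_smul_mem, SetLike.mem_coe, mem_stabilizer_iff, smul_eq_mul,
    mul_smul, hk, inv_smul_eq_iff, hk₀]

end MulAction

open MulAction in
theorem AmenableAction.amenableGroup_of_finite_stabilizer {K X : Type*} [Group K] [MulAction K X]
    (h : AmenableAction K X) (hfin : ∀ x : X, (stabilizer K x : Set K).Finite) :
    AmenableGroup K := by
  obtain ⟨m, hm⟩ := h
  have hσ (x : X) : (transporter K x).Finite :=
    have ⟨_, hk₀⟩ := transporter_nonempty x
    ((hfin _).smul_set).subset (transporter_subset_smul_stabilizer hk₀)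
  refine ⟨m.bind fun x => Mean.uniform _ (hσ x) (transporter_nonempty x), hm.bind fun k x A => ?_⟩
  change ((transporter K (k • x) ∩ k • A).ncard : ℝ) / (transporter K (k • x)).ncard = _
  rw [transporter_smul, ← Set.smul_set_inter, Set.ncard_smul_set, Set.ncard_smul_set]
  rfl

section Conjugation

variable {G : Type*} [Group G] {H : Subgroup G}

def conjInf (H : Subgroup G) (g : G) : Subgroup G :=
  Subgroup.map (MulAut.conj g).toMonoidHom H ⊓ H

theorem mem_conjInf {g x : G} : x ∈ conjInf H g ↔ g⁻¹ * x * g ∈ H ∧ x ∈ H := by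
  rw [conjInf, Subgroup.mem_inf, Subgroup.mem_map_equiv, MulAut.conj_symm_apply]

theorem conjInf_of_mem {g : G} (hg : g ∈ H) : conjInf H g = H :=
  inf_eq_right.mpr fun _ hx => (mem_conjInf.mpr ⟨H.mul_mem (H.mul_mem (H.inv_mem hg) hx) hg, hx⟩).1

theorem conjInf_conj_subset {c : G} (hc : c ∈ H) (g : G) :
    (conjInf H (c * g * c⁻¹) : Set G) ⊆ (fun y => c * y * c⁻¹) '' conjInf H g := by
  intro x hx
  obtain ⟨h₁, h₂⟩ := mem_conjInf.mp hx
  refine ⟨c⁻¹ * x * c, mem_conjInf.mpr ⟨?_, ?_⟩, by group⟩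
  · convert H.mul_mem (H.mul_mem (H.inv_mem hc) h₁) hc using 1
    group
  · exact H.mul_mem (H.mul_mem (H.inv_mem hc) h₂) hc

theorem mem_conjInf_of_conj_eq {c g : G} (hc : c ∈ H) (h : c * g * c⁻¹ = g) : c ∈ conjInf H g := by
  refine mem_conjInf.mpr ⟨?_, hc⟩
  convert hc using 1
  calc g⁻¹ * c * g = g⁻¹ * (c * g * c⁻¹) * c := by group
    _ = c := by rw [h]; group

theorem Mean.m_setOf_finite_conjInf_eq_zero {m : Mean G}
    (hconj : ∀ (g : G) (A : Set G), m.m ((fun x => g * x * g⁻¹) '' A) = m.m A)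
    (hH : ¬ AmenableGroup H) :
    m.m {g | (conjInf H g : Set G).Finite} = 0 := by
  -- `H` acting on `G` by conjugation, realized as a subgroup of `ConjAct G`
  set K := H.map ((ConjAct.toConjAct : G ≃* ConjAct G) : G →* ConjAct G)
  have hK (k : K) : ConjAct.ofConjAct (k : ConjAct G) ∈ H := Subgroup.mem_map_equiv.mp k.2
  have hm : MeanInvariant K m := fun k A => hconj (ConjAct.ofConjAct (k : ConjAct G)) A
  let B : SubMulAction K G :=
    { carrier := {g | (conjInf H g : Set G).Finite}
      smul_mem' := fun k g hg => (hg.image _).subset (conjInf_conj_subset (hK k) g) }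
  refine (m.nonneg _).antisymm' (not_lt.mp fun hpos => hH ?_)
  refine AmenableGroup.of_mulEquiv ((ConjAct.toConjAct : G ≃* ConjAct G).subgroupMap H).symm ?_
  refine AmenableAction.amenableGroup_of_finite_stabilizer ⟨_, hm.restrict B hpos⟩ fun x => ?_
  rw [SubMulAction.stabilizer_of_subMul]
  refine (x.2.preimage (f := fun k : K => ConjAct.ofConjAct (k : ConjAct G)) ?_).subset
    fun k hk => mem_conjInf_of_conj_eq (hK k) hk
  exact fun k _ k' _ h => Subtype.ext (ConjAct.ofConjAct.injective h)

def qNormalizer (H : Subgroup G) : Subgroup G :=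
  Subgroup.closure {g | (conjInf H g : Set G).Infinite}

theorem le_qNormalizer (hH : (H : Set G).Infinite) : H ≤ qNormalizer H :=
  fun _ hh => Subgroup.subset_closure (by rwa [Set.mem_ofPred_eq, conjInf_of_mem hh])

theorem isQNormal_qNormalizer (hH : (H : Set G).Infinite) : IsQNormal H (qNormalizer H) :=
  ⟨le_qNormalizer hH, congrArg Subgroup.closure <| Set.ext fun _ =>
    and_iff_right_of_imp fun hg => Subgroup.subset_closure hg⟩

theorem isQNormal_top (h : ∀ g, (conjInf H g : Set G).Infinite) : IsQNormal H ⊤ := by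
  refine ⟨le_top, Eq.trans ?_ Subgroup.closure_univ⟩
  exact congrArg Subgroup.closure (Set.eq_univ_of_forall fun g => ⟨Subgroup.mem_top g, h g⟩)

theorem Mean.conjInf_infinite_of_m_eq_one {m : Mean G} (hat : ∀ g, m.m {g} = 0)
    (hconj : ∀ (g : G) (A : Set G), m.m ((fun x => g * x * g⁻¹) '' A) = m.m A)
    (hH : m.m H = 1) (g : G) : (conjInf H g : Set G).Infinite := by
  intro hfin
  unfold conjInf at hfin
  have hgH : m.m (Subgroup.map (MulAut.conj g).toMonoidHom H) = 1 := hH ▸ hconj g H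
  have := m.add_le_one_add_m_inter (Subgroup.map (MulAut.conj g).toMonoidHom H) H
  rw [← Subgroup.coe_inf, m.m_eq_zero_of_finite hat hfin, hgH, hH] at this
  norm_num at this

end Conjugation

theorem IsLQNormal.isLWQNormal_trans {G : Type*} [Group G] {L : Subgroup G → Prop}
    {H K M : Subgroup G} (h₁ : IsLQNormal L H K) (h₂ : IsLQNormal L K M) : IsLWQNormal L H M := by
  set c : Ordinal.{0} → Subgroup G := fun α => if α = 0 then H else if α ≤ 1 then K else M
  have hmono : Monotone c := fun α β hαβ => by
    simp only [c]
    split_ifs <;> first | exact le_rfl | exact h₁.1 | exact h₂.1 | exact h₁.1.trans h₂.1 |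
      (exfalso; have : 0 ≤ α := zero_le; order)
  have hc₁ : c 1 = K := by simp [c]
  have hsup₁ : ⨆ (β : Ordinal.{0}) (_ : β < 1), c β = H :=
    le_antisymm (iSup₂_le fun β hβ => by simp [c, Order.lt_one_iff.mp hβ])
      (le_iSup₂_of_le 0 zero_lt_one (by simp [c]))
  have hsup₂ : ⨆ (β : Ordinal.{0}) (_ : β < 2), c β = K :=
    le_antisymm (iSup₂_le fun β hβ => hc₁ ▸ hmono (Order.lt_add_one_iff.mp
      (one_add_one_eq_two (R := Ordinal.{0}) ▸ hβ))) (le_iSup₂_of_le 1 one_lt_two hc₁.ge)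
  refine ⟨2, c, fun α β hαβ _ => hmono hαβ, by simp [c], by simp [c], fun α hα hα₂ => ?_⟩
  obtain rfl | rfl : α = 1 ∨ α = 2 := by
    rcases le_or_gt α 1 with h | h
    · exact Or.inl (le_antisymm h (Order.one_le_iff_pos.mpr hα))
    · exact Or.inr (le_antisymm hα₂
        (one_add_one_eq_two (R := Ordinal.{0}) ▸ Order.add_one_le_of_lt h))
  · rwa [hsup₁, hc₁]
  · rwa [hsup₂, show c 2 = M by simp [c]]

theorem nonamenable_subgroup_wq_normal_general {G : Type*} [Group G]
    (hIA : InnerAmenable G)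
    (H : Subgroup G) (hH : ¬ AmenableGroup ↥H) :
    IsWQNormal H ⊤ := by
  obtain ⟨m, hat, hconj⟩ := hIA
  have hinf : m.m {g | (conjInf H g : Set G).Infinite} = 1 := by
    change m.m {g | (conjInf H g : Set G).Finite}ᶜ = 1
    rw [m.m_compl, m.m_setOf_finite_conjInf_eq_zero hconj hH, sub_zero]
  obtain ⟨g, hg⟩ : {g | (conjInf H g : Set G).Infinite}.Nonempty :=
    Set.nonempty_iff_ne_empty.mpr fun h => by simp [h, m.m_empty] at hinf
  have hH_inf : (H : Set G).Infinite := hg.mono inf_le_right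
  have hQ : m.m (qNormalizer H) = 1 :=
    (m.m_le_one _).antisymm (hinf ▸ m.m_mono Subgroup.subset_closure)
  exact (isQNormal_qNormalizer hH_inf).isLWQNormal_trans
    (isQNormal_top (m.conjInf_infinite_of_m_eq_one hat hconj hQ))

/-- Theorem: in a nonamenable inner amenable countable group, every nonamenable subgroup
is wq-normal. -/
theorem nonamenable_subgroup_wq_normal {G : Type*} [Group G] [Countable G]
    (hG : ¬ AmenableGroup G) (hIA : InnerAmenable G)
    (H : Subgroup G) (hH : ¬ AmenableGroup ↥H) :
    IsWQNormal H ⊤ :=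
  nonamenable_subgroup_wq_normal_general hIA H hH
end

section
/- Let H and K be normal subgroups of a countable group G. (1) If H ≤ K and the actions H⋊G ↷ H and (K/H)⋊(G/H) ↷ K/H are both amenable, then the action K⋊G ↷ K is amenable. (2) If the actions H⋊G ↷ H and K⋊G ↷ K are both amenable, with invariant means m and n respectively, then the action HK⋊G ↷ HK is amenable, an invariant mean being given by the convolution m∗n defined by (m∗n)(A) = ∫_{g∈G} n(g⁻¹A) dm(g) for A ⊆ HK. -/
open Pointwise

/-- Amenability of the action `N ⋊ G ↷ N` (for `N ≤ G`): there is a mean on `G`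
concentrated on `N` which is invariant under left translation by elements of `N` and under
conjugation by all elements of `G`. -/
def SemidirectAmenable {G : Type*} [Group G] (N : Subgroup G) : Prop :=
  ∃ m : Mean G, m.m (N : Set G) = 1 ∧
    (∀ n ∈ N, ∀ A : Set G, m.m ((fun x => n * x) '' A) = m.m A) ∧
    (∀ (g : G) (A : Set G), m.m ((fun x => g * x * g⁻¹) '' A) = m.m A)

/-- The integral of a (bounded) function against a mean: the value of the unique positive
unital linear functional on bounded functions extending `m`, realized as the supremum of
the integrals of simple functions dominated by `f`. -/
noncomputable def Mean.integral {X : Type*} (m : Mean X) (f : X → ℝ) : ℝ :=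
  sSup {r : ℝ | ∃ g : X → ℝ, (Set.range g).Finite ∧ (∀ x, g x ≤ f x) ∧
    r = ∑ᶠ y : ℝ, y * m.m (g ⁻¹' {y})}

namespace MeanAux

variable {X : Type*} (μ : Mean X)

lemma m_empty : μ.m ∅ = 0 := by
  have h := μ.fin_add Set.univ ∅ (by simp)
  rw [Set.union_empty, μ.total] at h
  linarith [h]

lemma m_mono {A B : Set X} (h : A ⊆ B) : μ.m A ≤ μ.m B := by
  have h2 := μ.fin_add A (B \ A) Set.disjoint_sdiff_right
  rw [Set.union_diff_cancel h] at h2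
  have := μ.nonneg (B \ A)
  linarith

lemma m_le_one (A : Set X) : μ.m A ≤ 1 := by
  have := m_mono μ (Set.subset_univ A)
  rwa [μ.total] at this

lemma m_compl_eq_zero {A : Set X} (h : μ.m A = 1) : μ.m Aᶜ = 0 := by
  have h2 := μ.fin_add A Aᶜ disjoint_compl_right
  rw [Set.union_compl_self, μ.total, h] at h2
  linarith

lemma m_sum_parts {ι : Type*} [DecidableEq ι] (s : Finset ι) (f : ι → Set X)
    (hd : ∀ i ∈ s, ∀ j ∈ s, i ≠ j → Disjoint (f i) (f j)) :
    μ.m (⋃ i ∈ s, f i) = ∑ i ∈ s, μ.m (f i) := by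
  induction s using Finset.induction with
  | empty => simpa using m_empty μ
  | @insert a s ha ih =>
    rw [Finset.sum_insert ha, ← ih (fun i hi j hj hij =>
      hd i (Finset.mem_insert_of_mem hi) j (Finset.mem_insert_of_mem hj) hij)]
    rw [Finset.set_biUnion_insert]
    refine μ.fin_add _ _ ?_
    refine Set.disjoint_iUnion₂_right.mpr fun i hi => ?_
    exact hd a (Finset.mem_insert_self a s) i (Finset.mem_insert_of_mem hi)
      (fun he => ha (he ▸ hi))

/-- The simple-function integral. -/
noncomputable def I (g : X → ℝ) : ℝ := ∑ᶠ y : ℝ, y * μ.m (g ⁻¹' {y})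

lemma I_eq_sum (g : X → ℝ) (S : Finset ℝ) (hS : ∀ x, g x ∈ S) :
    I μ g = ∑ y ∈ S, y * μ.m (g ⁻¹' {y}) := by
  refine finsum_eq_sum_of_support_subset _ fun y hy => ?_
  by_contra hyS
  apply hy
  have : g ⁻¹' {y} = ∅ := by
    ext x; simp only [Set.mem_preimage, Set.mem_singleton_iff, Set.mem_empty_iff_false,
      iff_false]
    exact fun he => hyS (he ▸ hS x)
  simp [Function.mem_support, this, m_empty μ]


lemma I_rep (g h : X → ℝ) (hg : (Set.range g).Finite) (hh : (Set.range h).Finite) :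
    I μ g = ∑ p ∈ hg.toFinset ×ˢ hh.toFinset,
      p.1 * μ.m (g ⁻¹' {p.1} ∩ h ⁻¹' {p.2}) := by
  rw [I_eq_sum μ g hg.toFinset (fun x => hg.mem_toFinset.2 ⟨x, rfl⟩), Finset.sum_product]
  refine Finset.sum_congr rfl fun y _ => ?_
  rw [← Finset.mul_sum]
  congr 1
  rw [← m_sum_parts μ hh.toFinset (fun z => g ⁻¹' {y} ∩ h ⁻¹' {z})]
  · congr 1
    ext x
    simp only [Set.mem_iUnion, Set.mem_inter_iff, Set.mem_preimage, Set.mem_singleton_iff]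
    constructor
    · intro hx
      exact ⟨h x, hh.mem_toFinset.2 ⟨x, rfl⟩, hx, rfl⟩
    · rintro ⟨z, _, hx, _⟩; exact hx
  · intro i _ j _ hij
    rw [Set.disjoint_left]
    rintro x ⟨_, hxi⟩ ⟨_, hxj⟩
    exact hij ((Set.mem_singleton_iff.1 hxi).symm.trans (Set.mem_singleton_iff.1 hxj))

lemma I_rep2 (g h : X → ℝ) (hg : (Set.range g).Finite) (hh : (Set.range h).Finite) :
    I μ h = ∑ p ∈ hg.toFinset ×ˢ hh.toFinset,
      p.2 * μ.m (g ⁻¹' {p.1} ∩ h ⁻¹' {p.2}) := by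
  rw [I_rep μ h g hh hg]
  refine Finset.sum_nbij' (fun p : ℝ × ℝ => (p.2, p.1)) (fun p : ℝ × ℝ => (p.2, p.1))
    ?_ ?_ ?_ ?_ ?_
  · intro p hp
    rcases Finset.mem_product.1 hp with ⟨h1, h2⟩
    exact Finset.mem_product.2 ⟨h2, h1⟩
  · intro p hp
    rcases Finset.mem_product.1 hp with ⟨h1, h2⟩
    exact Finset.mem_product.2 ⟨h2, h1⟩
  · intro p _; rfl
  · intro p _; rfl
  · intro p _
    simp only []
    rw [Set.inter_comm]

lemma I_mono {g h : X → ℝ} (hg : (Set.range g).Finite) (hh : (Set.range h).Finite)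
    (hle : ∀ x, g x ≤ h x) : I μ g ≤ I μ h := by
  rw [I_rep μ g h hg hh]
  rw [I_rep2 μ g h hg hh]
  refine Finset.sum_le_sum fun p _ => ?_
  rcases (g ⁻¹' {p.1} ∩ h ⁻¹' {p.2}).eq_empty_or_nonempty with he | ⟨x, hx1, hx2⟩
  · rw [he, m_empty μ, mul_zero, mul_zero]
  · have h1 : g x = p.1 := hx1
    have h2 : h x = p.2 := hx2
    exact mul_le_mul_of_nonneg_right (h1 ▸ h2 ▸ hle x) (μ.nonneg _)

lemma I_add (g h : X → ℝ) (hg : (Set.range g).Finite) (hh : (Set.range h).Finite) :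
    I μ (fun x => g x + h x) = I μ g + I μ h := by
  classical
  set S := hg.toFinset
  set T := hh.toFinset
  set W : Finset ℝ := (S ×ˢ T).image (fun p => p.1 + p.2) with hW
  have hmem : ∀ x, g x + h x ∈ W := fun x =>
    Finset.mem_image.2 ⟨(g x, h x), Finset.mem_product.2
      ⟨hg.mem_toFinset.2 ⟨x, rfl⟩, hh.mem_toFinset.2 ⟨x, rfl⟩⟩, rfl⟩
  rw [I_eq_sum μ _ W hmem]
  have key : ∀ w ∈ W, w * μ.m ((fun x => g x + h x) ⁻¹' {w}) =
      ∑ p ∈ (S ×ˢ T).filter (fun p => p.1 + p.2 = w),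
        (p.1 + p.2) * μ.m (g ⁻¹' {p.1} ∩ h ⁻¹' {p.2}) := by
    intro w _
    have hpart : μ.m ((fun x => g x + h x) ⁻¹' {w}) =
        ∑ p ∈ (S ×ˢ T).filter (fun p => p.1 + p.2 = w),
          μ.m (g ⁻¹' {p.1} ∩ h ⁻¹' {p.2}) := by
      rw [← m_sum_parts μ _ (fun p : ℝ × ℝ => g ⁻¹' {p.1} ∩ h ⁻¹' {p.2})]
      · congr 1
        ext x
        simp only [Set.mem_iUnion, Set.mem_preimage, Set.mem_singleton_iff,
          Set.mem_inter_iff, Finset.mem_filter, Finset.mem_product]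
        constructor
        · intro hx
          exact ⟨(g x, h x), ⟨⟨hg.mem_toFinset.2 ⟨x, rfl⟩, hh.mem_toFinset.2 ⟨x, rfl⟩⟩, hx⟩,
            rfl, rfl⟩
        · rintro ⟨p, ⟨_, hsum⟩, h1, h2⟩
          rw [← h1, ← h2] at hsum; exact hsum
      · intro i _ j _ hij
        rw [Set.disjoint_left]
        rintro x ⟨hxi1, hxi2⟩ ⟨hxj1, hxj2⟩
        apply hij
        ext
        · exact (Set.mem_singleton_iff.1 hxi1).symm.trans (Set.mem_singleton_iff.1 hxj1)
        · exact (Set.mem_singleton_iff.1 hxi2).symm.trans (Set.mem_singleton_iff.1 hxj2)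
    rw [hpart, Finset.mul_sum]
    refine Finset.sum_congr rfl fun p hp => ?_
    rw [(Finset.mem_filter.1 hp).2]
  have h1 : I μ g = ∑ p ∈ S ×ˢ T, p.1 * μ.m (g ⁻¹' {p.1} ∩ h ⁻¹' {p.2}) :=
    I_rep μ g h hg hh
  have h2 : I μ h = ∑ p ∈ S ×ˢ T, p.2 * μ.m (g ⁻¹' {p.1} ∩ h ⁻¹' {p.2}) :=
    I_rep2 μ g h hg hh
  rw [Finset.sum_congr rfl key, hW, h1, h2, ← Finset.sum_add_distrib]
  have hcong : ∀ p ∈ S ×ˢ T, p.1 * μ.m (g ⁻¹' {p.1} ∩ h ⁻¹' {p.2}) +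
      p.2 * μ.m (g ⁻¹' {p.1} ∩ h ⁻¹' {p.2}) =
      (p.1 + p.2) * μ.m (g ⁻¹' {p.1} ∩ h ⁻¹' {p.2}) := fun p _ => by ring
  rw [Finset.sum_congr rfl hcong]
  exact Finset.sum_fiberwise_of_maps_to (fun p hp => Finset.mem_image.2 ⟨p, hp, rfl⟩) _

lemma I_const (c : ℝ) : I μ (fun _ => c) = c := by
  rw [I_eq_sum μ _ {c} (fun x => Finset.mem_singleton_self c)]
  have : (fun _ : X => c) ⁻¹' {c} = Set.univ := by ext x; simp
  rw [Finset.sum_singleton, this, μ.total, mul_one]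

lemma I_indicator (A : Set X) [∀ x, Decidable (x ∈ A)] :
    I μ (fun x => if x ∈ A then (1 : ℝ) else 0) = μ.m A := by
  have h01 : ∀ x, (if x ∈ A then (1 : ℝ) else 0) ∈ ({0, 1} : Finset ℝ) := by
    intro x; by_cases h : x ∈ A <;> simp [h]
  rw [I_eq_sum μ _ {0, 1} h01]
  have hpre : (fun x => if x ∈ A then (1 : ℝ) else 0) ⁻¹' {1} = A := by
    ext x
    simp only [Set.mem_preimage, Set.mem_singleton_iff]
    split <;> simp_all
  rw [Finset.sum_insert (by norm_num), Finset.sum_singleton, hpre]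
  ring

lemma range_indicator_finite (A : Set X) [∀ x, Decidable (x ∈ A)] :
    (Set.range fun x => if x ∈ A then (1 : ℝ) else 0).Finite := by
  refine Set.Finite.subset ((Set.finite_singleton (1:ℝ)).insert 0) ?_
  rintro _ ⟨x, rfl⟩
  by_cases h : x ∈ A <;> simp [h]


lemma const_range_finite (c : ℝ) : (Set.range fun _ : X => c).Finite :=
  (Set.finite_singleton c).subset (by rintro _ ⟨x, rfl⟩; simp)

/-- The defining set of the integral. -/
def ISet (f : X → ℝ) : Set ℝ :=
  {r : ℝ | ∃ g : X → ℝ, (Set.range g).Finite ∧ (∀ x, g x ≤ f x) ∧ r = I μ g}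

lemma integral_def (f : X → ℝ) : μ.integral f = sSup (ISet μ f) := rfl

lemma ISet_bddAbove (f : X → ℝ) (C : ℝ) (hC : ∀ x, f x ≤ C) : BddAbove (ISet μ f) := by
  refine ⟨C, fun r hr => ?_⟩
  obtain ⟨g, hfin, hle, rfl⟩ := hr
  calc I μ g ≤ I μ (fun _ => C) := I_mono μ hfin (const_range_finite C)
        (fun x => (hle x).trans (hC x))
    _ = C := I_const μ C

lemma ISet_nonempty (f : X → ℝ) (h0 : ∀ x, 0 ≤ f x) : (0 : ℝ) ∈ ISet μ f :=
  ⟨fun _ => 0, const_range_finite 0, h0, (I_const μ 0).symm⟩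

lemma le_integral (f : X → ℝ) (C : ℝ) (hC : ∀ x, f x ≤ C) (g : X → ℝ)
    (hfin : (Set.range g).Finite) (hle : ∀ x, g x ≤ f x) : I μ g ≤ μ.integral f :=
  le_csSup (ISet_bddAbove μ f C hC) ⟨g, hfin, hle, rfl⟩

lemma integral_le (f : X → ℝ) (h0 : ∀ x, 0 ≤ f x) (t : X → ℝ)
    (hfin : (Set.range t).Finite) (hle : ∀ x, f x ≤ t x) : μ.integral f ≤ I μ t := by
  refine csSup_le ⟨0, ISet_nonempty μ f h0⟩ ?_
  rintro r ⟨g, hg, hgle, rfl⟩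
  exact I_mono μ hg hfin fun x => (hgle x).trans (hle x)

lemma integral_nonneg (f : X → ℝ) (h0 : ∀ x, 0 ≤ f x) (C : ℝ) (hC : ∀ x, f x ≤ C) :
    0 ≤ μ.integral f :=
  le_csSup (ISet_bddAbove μ f C hC) (ISet_nonempty μ f h0)

lemma integral_indicator (A : Set X) [∀ x, Decidable (x ∈ A)] :
    μ.integral (fun x => if x ∈ A then (1 : ℝ) else 0) = μ.m A := by
  refine le_antisymm ?_ ?_
  · calc μ.integral _ ≤ I μ (fun x => if x ∈ A then (1 : ℝ) else 0) :=
        integral_le μ _ (fun x => by by_cases h : x ∈ A <;> simp [h]) _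
          (range_indicator_finite A) (fun x => le_refl _)
      _ = μ.m A := I_indicator μ A
  · calc μ.m A = I μ (fun x => if x ∈ A then (1 : ℝ) else 0) := (I_indicator μ A).symm
      _ ≤ μ.integral _ := le_integral μ _ 1
          (fun x => by by_cases h : x ∈ A <;> simp [h]) _
          (range_indicator_finite A) (fun x => le_refl _)

lemma I_comp (φ : X → X) (hφ : ∀ A : Set X, μ.m (φ ⁻¹' A) = μ.m A) (g : X → ℝ) :
    I μ (fun x => g (φ x)) = I μ g := by
  refine finsum_congr fun y => ?_
  rw [show ((fun x => g (φ x)) ⁻¹' {y}) = φ ⁻¹' (g ⁻¹' {y}) from rfl, hφ]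

lemma integral_comp (φ ψ : X → X) (h1 : ∀ x, ψ (φ x) = x) (h2 : ∀ x, φ (ψ x) = x)
    (hφ : ∀ A : Set X, μ.m (φ ⁻¹' A) = μ.m A) (f : X → ℝ) :
    μ.integral (fun x => f (φ x)) = μ.integral f := by
  have hψ : ∀ A : Set X, μ.m (ψ ⁻¹' A) = μ.m A := by
    intro A
    have h3 := hφ (ψ ⁻¹' A)
    rw [show φ ⁻¹' (ψ ⁻¹' A) = A by ext x; simp [h1]] at h3
    exact h3.symm
  rw [integral_def, integral_def]
  congr 1
  ext r
  constructor
  · rintro ⟨g, hfin, hle, rfl⟩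
    refine ⟨fun x => g (ψ x), ?_, fun x => ?_, ?_⟩
    · exact Set.Finite.subset hfin (by rintro _ ⟨x, rfl⟩; exact ⟨ψ x, rfl⟩)
    · simpa only [h2 x] using hle (ψ x)
    · rw [I_comp μ ψ hψ g]
  · rintro ⟨g, hfin, hle, rfl⟩
    refine ⟨fun x => g (φ x), ?_, fun x => hle (φ x), ?_⟩
    · exact Set.Finite.subset hfin (by rintro _ ⟨x, rfl⟩; exact ⟨φ x, rfl⟩)
    · rw [I_comp μ φ hφ g]

lemma exists_floor (f : X → ℝ) (h0 : ∀ x, 0 ≤ f x) (C : ℝ) (hC : ∀ x, f x ≤ C)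
    {ε : ℝ} (hε : 0 < ε) :
    ∃ s : X → ℝ, (Set.range s).Finite ∧ (∀ x, 0 ≤ s x) ∧ (∀ x, s x ≤ f x) ∧
      (∀ x, f x ≤ s x + ε) := by
  refine ⟨fun x => ε * ⌊f x / ε⌋, ?_, fun x => ?_, fun x => ?_, fun x => ?_⟩
  · have hfin : (Set.Icc (0 : ℤ) ⌈C / ε⌉).Finite := Set.finite_Icc _ _
    refine Set.Finite.subset (hfin.image fun k : ℤ => ε * k) ?_
    rintro _ ⟨x, rfl⟩
    refine ⟨⌊f x / ε⌋, ⟨Int.floor_nonneg.2 (div_nonneg (h0 x) hε.le), ?_⟩, rfl⟩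
    have h1 : f x / ε ≤ C / ε := by gcongr; exact hC x
    calc ⌊f x / ε⌋ ≤ ⌊C / ε⌋ := Int.floor_le_floor h1
      _ ≤ ⌈C / ε⌉ := Int.floor_le_ceil _
  · have h1 : (0 : ℤ) ≤ ⌊f x / ε⌋ := Int.floor_nonneg.2 (div_nonneg (h0 x) hε.le)
    have h2 : (0 : ℝ) ≤ (⌊f x / ε⌋ : ℝ) := by exact_mod_cast h1
    exact mul_nonneg hε.le h2
  · calc ε * ⌊f x / ε⌋ ≤ ε * (f x / ε) :=
        mul_le_mul_of_nonneg_left (Int.floor_le _) hε.le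
      _ = f x := by field_simp
  · have h1 : f x / ε < ⌊f x / ε⌋ + 1 := Int.lt_floor_add_one _
    have h2 : f x = ε * (f x / ε) := by field_simp
    nlinarith

lemma integral_near (f : X → ℝ) (h0 : ∀ x, 0 ≤ f x) (C : ℝ) (hC : ∀ x, f x ≤ C)
    {ε : ℝ} (hε : 0 < ε) :
    ∃ s : X → ℝ, (Set.range s).Finite ∧ (∀ x, 0 ≤ s x) ∧ (∀ x, s x ≤ f x) ∧
      (∀ x, f x ≤ s x + ε) ∧
      I μ s ≤ μ.integral f ∧ μ.integral f ≤ I μ s + ε := by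
  obtain ⟨s, hfin, hs0, hsle, hfle⟩ := exists_floor f h0 C hC hε
  refine ⟨s, hfin, hs0, hsle, hfle, le_integral μ f C hC s hfin hsle, ?_⟩
  have hfint : (Set.range fun x => s x + ε).Finite := by
    refine Set.Finite.subset (hfin.image (· + ε)) ?_
    rintro _ ⟨x, rfl⟩
    exact ⟨s x, ⟨x, rfl⟩, rfl⟩
  have hsum : I μ (fun x => s x + ε) = I μ s + ε := by
    rw [I_add μ s (fun _ => ε) hfin (const_range_finite ε), I_const]
  have hle2 : μ.integral f ≤ I μ (fun x => s x + ε) :=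
    integral_le μ f h0 (fun x => s x + ε) hfint hfle
  linarith

lemma integral_add (f f' : X → ℝ) (h0 : ∀ x, 0 ≤ f x) (h0' : ∀ x, 0 ≤ f' x)
    (C : ℝ) (hC : ∀ x, f x ≤ C) (hC' : ∀ x, f' x ≤ C) :
    μ.integral (fun x => f x + f' x) = μ.integral f + μ.integral f' := by
  have hsum0 : ∀ x, 0 ≤ f x + f' x := fun x => add_nonneg (h0 x) (h0' x)
  have hsumC : ∀ x, f x + f' x ≤ C + C := fun x => add_le_add (hC x) (hC' x)
  have hranges : ∀ (s s' : X → ℝ), (Set.range s).Finite → (Set.range s').Finite →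
      (Set.range fun x => s x + s' x).Finite := by
    intro s s' h1 h2
    refine Set.Finite.subset (Set.Finite.image2 (· + ·) h1 h2) ?_
    rintro _ ⟨x, rfl⟩
    exact Set.mem_image2_of_mem ⟨x, rfl⟩ ⟨x, rfl⟩
  refine le_antisymm ?_ ?_
  · refine le_of_forall_pos_le_add fun ε hε => ?_
    obtain ⟨s, hsfin, hs0, hsle, hfle, hsl, hsu⟩ := integral_near μ f h0 C hC (half_pos hε)
    obtain ⟨s', hsfin', hs0', hsle', hfle', hsl', hsu'⟩ :=
      integral_near μ f' h0' C hC' (half_pos hε)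
    have hss : (Set.range fun x => s x + s' x).Finite := hranges s s' hsfin hsfin'
    have hssε : (Set.range fun x => s x + s' x + ε).Finite :=
      hranges _ (fun _ => ε) hss (const_range_finite ε)
    have hI : I μ (fun x => s x + s' x + ε) = I μ s + I μ s' + ε := by
      rw [I_add μ (fun x => s x + s' x) (fun _ => ε) hss (const_range_finite ε),
        I_add μ s s' hsfin hsfin', I_const]
    calc μ.integral (fun x => f x + f' x) ≤ I μ (fun x => s x + s' x + ε) := by
          refine integral_le μ _ hsum0 _ hssε fun x => ?_
          have := add_le_add (hfle x) (hfle' x)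
          linarith
      _ = I μ s + I μ s' + ε := hI
      _ ≤ μ.integral f + μ.integral f' + ε := by linarith
  · refine le_of_forall_pos_le_add fun ε hε => ?_
    obtain ⟨s, hsfin, hs0, hsle, hfle, hsl, hsu⟩ := integral_near μ f h0 C hC (half_pos hε)
    obtain ⟨s', hsfin', hs0', hsle', hfle', hsl', hsu'⟩ :=
      integral_near μ f' h0' C hC' (half_pos hε)
    have hss : (Set.range fun x => s x + s' x).Finite := hranges s s' hsfin hsfin'
    have hI : I μ (fun x => s x + s' x) = I μ s + I μ s' :=
      I_add μ s s' hsfin hsfin'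
    have hle2 : I μ (fun x => s x + s' x) ≤ μ.integral (fun x => f x + f' x) :=
      le_integral μ _ (C + C) hsumC _ hss fun x => add_le_add (hsle x) (hsle' x)
    linarith


lemma conj_image {T : Type*} [Group T] (c : T) (B : Set T) :
    (fun y => c * y * c⁻¹) '' B = (fun y => c⁻¹ * y * c) ⁻¹' B := by
  ext z
  simp only [Set.mem_image, Set.mem_preimage]
  constructor
  · rintro ⟨y, hy, rfl⟩
    have h : c⁻¹ * (c * y * c⁻¹) * c = y := by group
    rwa [h]
  · intro h
    exact ⟨c⁻¹ * z * c, h, by group⟩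

lemma conv_main {G Q : Type*} [Group G] [Group Q] (π : G →* Q) (hπ : Function.Surjective π)
    (N M : Subgroup G) [hNn : N.Normal] (hker : π.ker ≤ N)
    (ν : Mean G) (μ : Mean Q)
    (hν1 : ν.m (N : Set G) = 1)
    (hνl : ∀ h ∈ N, ∀ A : Set G, ν.m ((fun x => h * x) '' A) = ν.m A)
    (hνc : ∀ (g : G) (A : Set G), ν.m ((fun x => g * x * g⁻¹) '' A) = ν.m A)
    (hμ1 : μ.m ((Subgroup.map π M : Subgroup Q) : Set Q) = 1)
    (hμl : ∀ q ∈ Subgroup.map π M, ∀ A : Set Q, μ.m ((fun x => q * x) '' A) = μ.m A)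
    (hμc : ∀ (q : Q) (A : Set Q), μ.m ((fun x => q * x * q⁻¹) '' A) = μ.m A) :
    ∃ p : Mean G,
      (∀ A : Set G, p.m A =
        μ.integral (fun q => ν.m ((fun x => Function.surjInv hπ q * x) ⁻¹' A))) ∧
      p.m ((M ⊔ N : Subgroup G) : Set G) = 1 ∧
      (∀ x ∈ (M ⊔ N : Subgroup G), ∀ A : Set G,
        p.m ((fun y => x * y) '' A) = p.m A) ∧
      (∀ (g : G) (A : Set G), p.m ((fun y => g * y * g⁻¹) '' A) = p.m A) := by
  classical
  set σ := Function.surjInv hπ with hσdef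
  have hσπ : ∀ q, π (σ q) = q := fun q => Function.surjInv_eq hπ q
  have hcomp : ∀ (g g' : G) (A : Set G), (fun x => (g * g') * x) ⁻¹' A =
      (fun x => g' * x) ⁻¹' ((fun x => g * x) ⁻¹' A) := by
    intro g g' A
    ext x
    simp [Set.mem_preimage, mul_assoc]
  have hνl' : ∀ h ∈ N, ∀ B : Set G, ν.m ((fun x => h * x) ⁻¹' B) = ν.m B := by
    intro h hh B
    rw [← Set.image_mul_left']
    exact hνl h⁻¹ (inv_mem hh) B
  have F_spec : ∀ (A : Set G) (g : G),
      ν.m ((fun x => σ (π g) * x) ⁻¹' A) = ν.m ((fun x => g * x) ⁻¹' A) := by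
    intro A g
    have hk : g⁻¹ * σ (π g) ∈ N := hker (by
      rw [MonoidHom.mem_ker, map_mul, map_inv, hσπ, inv_mul_cancel])
    have hdec : σ (π g) = g * (g⁻¹ * σ (π g)) := by rw [mul_inv_cancel_left]
    rw [hdec, hcomp g (g⁻¹ * σ (π g)) A]
    exact hνl' _ hk _
  have hF0 : ∀ (A : Set G) (q : Q), 0 ≤ ν.m ((fun x => σ q * x) ⁻¹' A) :=
    fun A q => ν.nonneg _
  have hF1 : ∀ (A : Set G) (q : Q), ν.m ((fun x => σ q * x) ⁻¹' A) ≤ 1 :=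
    fun A q => m_le_one ν _
  refine ⟨⟨fun A => μ.integral (fun q => ν.m ((fun x => σ q * x) ⁻¹' A)), ?_, ?_, ?_⟩,
    fun A => rfl, ?_, ?_, ?_⟩
  · -- nonneg
    exact fun A => integral_nonneg μ _ (hF0 A) 1 (hF1 A)
  · -- total
    show μ.integral (fun q => ν.m ((fun x => σ q * x) ⁻¹' Set.univ)) = 1
    have h1 : (fun q : Q => ν.m ((fun x => σ q * x) ⁻¹' Set.univ)) =
        fun q : Q => if q ∈ (Set.univ : Set Q) then (1 : ℝ) else 0 := by
      funext q
      rw [Set.preimage_univ, ν.total]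
      simp
    rw [h1, integral_indicator, μ.total]
  · -- fin_add
    intro A B hAB
    show μ.integral _ = μ.integral _ + μ.integral _
    have h1 : (fun q : Q => ν.m ((fun x => σ q * x) ⁻¹' (A ∪ B))) =
        fun q : Q => ν.m ((fun x => σ q * x) ⁻¹' A) + ν.m ((fun x => σ q * x) ⁻¹' B) := by
      funext q
      rw [Set.preimage_union]
      exact ν.fin_add _ _ (hAB.preimage _)
    rw [h1]
    exact integral_add μ _ _ (hF0 A) (hF0 B) 1 (hF1 A) (hF1 B)
  · -- concentration on M ⊔ N
    show μ.integral _ = 1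
    have hNc : ν.m ((N : Set G))ᶜ = 0 := m_compl_eq_zero ν hν1
    have key : (fun q : Q => ν.m ((fun x => σ q * x) ⁻¹' ((M ⊔ N : Subgroup G) : Set G))) =
        fun q : Q => if q ∈ π '' ((M ⊔ N : Subgroup G) : Set G) then (1 : ℝ) else 0 := by
      funext q
      obtain ⟨g, rfl⟩ := hπ q
      rw [F_spec]
      by_cases hg : g ∈ M ⊔ N
      · rw [if_pos ⟨g, hg, rfl⟩]
        refine le_antisymm (m_le_one ν _) ?_
        have hsub : (N : Set G) ⊆ (fun x => g * x) ⁻¹' ((M ⊔ N : Subgroup G) : Set G) := by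
          intro x hx
          exact mul_mem hg (SetLike.le_def.1 le_sup_right hx)
        calc (1 : ℝ) = ν.m (N : Set G) := hν1.symm
          _ ≤ _ := m_mono ν hsub
      · rw [if_neg ?_]
        · refine le_antisymm ?_ (ν.nonneg _)
          have hsub : (fun x => g * x) ⁻¹' ((M ⊔ N : Subgroup G) : Set G) ⊆
              ((N : Set G))ᶜ := by
            intro x hx hxN
            refine hg ?_
            have h2 : g = (g * x) * x⁻¹ := by group
            rw [h2]
            exact mul_mem hx (inv_mem (SetLike.le_def.1 le_sup_right hxN))
          exact (m_mono ν hsub).trans (le_of_eq hNc)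
        · rintro ⟨y, hy, hyg⟩
          have hky : y⁻¹ * g ∈ π.ker := by
            rw [MonoidHom.mem_ker, map_mul, map_inv, hyg, inv_mul_cancel]
          have h2 : g = y * (y⁻¹ * g) := by group
          exact hg (h2 ▸ mul_mem hy (SetLike.le_def.1 le_sup_right (hker hky)))
    rw [key, integral_indicator]
    refine le_antisymm (m_le_one μ _) ?_
    rw [← hμ1]
    refine m_mono μ ?_
    rintro _ ⟨a, ha, rfl⟩
    exact ⟨a, SetLike.le_def.1 le_sup_left ha, rfl⟩
  · -- translation invariance
    intro x hx A
    have hx' : x ∈ ((M : Set G) * (N : Set G)) := by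
      rw [← Subgroup.mul_normal M N]
      exact hx
    obtain ⟨a, ha, b, hb, rfl⟩ := Set.mem_mul.1 hx'
    show μ.integral _ = μ.integral _
    have himg : (fun y => a * b * y) '' A = (fun y => a * y) '' ((fun y => b * y) '' A) := by
      rw [Set.image_image]
      exact Set.image_congr fun y _ => mul_assoc a b y
    rw [himg]
    -- step 1 : strip b ∈ N (pointwise equality)
    have keyb : ∀ B : Set G, (fun q : Q => ν.m ((fun x => σ q * x) ⁻¹' ((fun y => b * y) '' B))) =
        fun q : Q => ν.m ((fun x => σ q * x) ⁻¹' B) := by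
      intro B
      funext q
      obtain ⟨g, rfl⟩ := hπ q
      rw [F_spec, F_spec, Set.image_mul_left, ← hcomp b⁻¹ g B]
      have h2 : b⁻¹ * g = g * (g⁻¹ * b⁻¹ * g) := by group
      rw [h2, hcomp g (g⁻¹ * b⁻¹ * g) B]
      refine hνl' _ ?_ _
      have := hNn.conj_mem b⁻¹ (inv_mem hb) g⁻¹
      rwa [inv_inv] at this
    -- step 2 : strip a ∈ M (composition with left translation on Q)
    have keya : ∀ B : Set G, ∀ q : Q, ν.m ((fun x => σ q * x) ⁻¹' ((fun y => a * y) '' B)) =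
        ν.m ((fun x => σ ((π a)⁻¹ * q) * x) ⁻¹' B) := by
      intro B q
      obtain ⟨g, rfl⟩ := hπ q
      have h3 : (π a)⁻¹ * π g = π (a⁻¹ * g) := by rw [map_mul, map_inv]
      rw [F_spec, h3, F_spec, Set.image_mul_left, ← hcomp a⁻¹ g B]
    have h4 : (fun q : Q => ν.m ((fun x => σ q * x) ⁻¹' ((fun y => a * y) ''
        ((fun y => b * y) '' A)))) =
        fun q : Q => ν.m ((fun x => σ ((π a)⁻¹ * q) * x) ⁻¹' ((fun y => b * y) '' A)) := by
      funext q
      exact keya _ q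
    rw [h4]
    have h5 := integral_comp μ (fun q => (π a)⁻¹ * q) (fun q => π a * q)
      (fun q => by show π a * ((π a)⁻¹ * q) = q; rw [mul_inv_cancel_left])
      (fun q => by show (π a)⁻¹ * (π a * q) = q; rw [inv_mul_cancel_left])
      (by
        intro B
        rw [← Set.image_mul_left]
        exact hμl (π a) ⟨a, ha, rfl⟩ B)
      (fun q : Q => ν.m ((fun x => σ q * x) ⁻¹' ((fun y => b * y) '' A)))
    rw [h5, keyb A]
  · -- conjugation invariance
    intro g A
    show μ.integral _ = μ.integral _
    have key : ∀ q : Q, ν.m ((fun x => σ q * x) ⁻¹' ((fun y => g * y * g⁻¹) '' A)) =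
        ν.m ((fun x => σ ((π g)⁻¹ * q * π g) * x) ⁻¹' A) := by
      intro q
      obtain ⟨x, rfl⟩ := hπ q
      have h3 : (π g)⁻¹ * π x * π g = π (g⁻¹ * x * g) := by rw [map_mul, map_mul, map_inv]
      rw [F_spec, h3, F_spec, conj_image]
      have hset : (fun w => x * w) ⁻¹' ((fun y => g⁻¹ * y * g) ⁻¹' A) =
          (fun w => g * w * g⁻¹) '' ((fun w => (g⁻¹ * x * g) * w) ⁻¹' A) := by
        ext w
        simp only [Set.mem_preimage, Set.mem_image]
        constructor
        · intro hw
          refine ⟨g⁻¹ * w * g, ?_, by group⟩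
          have h6 : g⁻¹ * x * g * (g⁻¹ * w * g) = g⁻¹ * (x * w) * g := by group
          show g⁻¹ * x * g * (g⁻¹ * w * g) ∈ A
          rw [h6]
          exact hw
        · rintro ⟨v, hv, rfl⟩
          have h6 : g⁻¹ * (x * (g * v * g⁻¹)) * g = g⁻¹ * x * g * v := by group
          rw [h6]
          exact hv
      rw [hset, hνc g]
    have h4 : (fun q : Q => ν.m ((fun x => σ q * x) ⁻¹' ((fun y => g * y * g⁻¹) '' A))) =
        fun q : Q => ν.m ((fun x => σ ((π g)⁻¹ * q * π g) * x) ⁻¹' A) := funext key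
    rw [h4]
    have h5 := integral_comp μ (fun q => (π g)⁻¹ * q * π g) (fun q => π g * q * (π g)⁻¹)
      (fun q => by show π g * ((π g)⁻¹ * q * π g) * (π g)⁻¹ = q; group)
      (fun q => by show (π g)⁻¹ * (π g * q * (π g)⁻¹) * π g = q; group)
      (by
        intro B
        rw [← conj_image (π g) B]
        exact hμc (π g) B)
      (fun q : Q => ν.m ((fun x => σ q * x) ⁻¹' A))
    rw [h5]

end MeanAux

/-- Lemma: (1) amenability of `N ⋊ G ↷ N` passes through extensions `H ≤ K`; (2) if `m`
and `n` are invariant means for `H ⋊ G ↷ H` and `K ⋊ G ↷ K`, then the convolution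
`(m ∗ n)(A) = ∫_G n(g⁻¹A) dm(g)` is an invariant mean for `HK ⋊ G ↷ HK`. -/
theorem semidirect_amenable_extension {G : Type*} [Group G] [Countable G]
    (H K : Subgroup G) [H.Normal] [K.Normal] :
    -- (1)
    (H ≤ K → SemidirectAmenable H →
      SemidirectAmenable (Subgroup.map (QuotientGroup.mk' H) K) →
      SemidirectAmenable K) ∧
    -- (2)
    (∀ m n : Mean G,
      (m.m (H : Set G) = 1 ∧
        (∀ h ∈ H, ∀ A : Set G, m.m ((fun x => h * x) '' A) = m.m A) ∧
        (∀ (g : G) (A : Set G), m.m ((fun x => g * x * g⁻¹) '' A) = m.m A)) →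
      (n.m (K : Set G) = 1 ∧
        (∀ k ∈ K, ∀ A : Set G, n.m ((fun x => k * x) '' A) = n.m A) ∧
        (∀ (g : G) (A : Set G), n.m ((fun x => g * x * g⁻¹) '' A) = n.m A)) →
      ∃ p : Mean G,
        (∀ A : Set G, p.m A = m.integral (fun g => n.m ((fun x => g * x) ⁻¹' A))) ∧
        p.m ((H ⊔ K : Subgroup G) : Set G) = 1 ∧
        (∀ x ∈ (H ⊔ K : Subgroup G), ∀ A : Set G,
          p.m ((fun y => x * y) '' A) = p.m A) ∧
        (∀ (g : G) (A : Set G), p.m ((fun y => g * y * g⁻¹) '' A) = p.m A)) := by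
  constructor
  · -- part (1)
    intro hHK hSA hSAq
    obtain ⟨m, hm1, hml, hmc⟩ := hSA
    obtain ⟨mb, hmb1, hmbl, hmbc⟩ := hSAq
    obtain ⟨p, hpf, hp1, hpl, hpc⟩ := MeanAux.conv_main (QuotientGroup.mk' H)
      (QuotientGroup.mk'_surjective H) H K
      (by rw [QuotientGroup.ker_mk']) m mb hm1 hml hmc hmb1 hmbl hmbc
    refine ⟨p, ?_, ?_, hpc⟩
    · rw [show K ⊔ H = K from sup_eq_left.mpr hHK] at hp1
      exact hp1
    · intro x hx A
      exact hpl x (SetLike.le_def.1 le_sup_left hx) A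
  · -- part (2)
    intro m n hm hn
    obtain ⟨hm1, hml, hmc⟩ := hm
    obtain ⟨hn1, hnl, hnc⟩ := hn
    have hπ : Function.Surjective (MonoidHom.id G) := fun x => ⟨x, rfl⟩
    have hker : (MonoidHom.id G).ker ≤ K := by
      intro x hx
      rw [MonoidHom.mem_ker] at hx
      simp only [MonoidHom.id_apply] at hx
      rw [hx]
      exact one_mem K
    have hmapH : Subgroup.map (MonoidHom.id G) H = H := Subgroup.map_id H
    obtain ⟨p, hpf, hp1, hpl, hpc⟩ := MeanAux.conv_main (MonoidHom.id G) hπ K H hker n m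
      hn1 hnl hnc (by rw [hmapH]; exact hm1) (by rw [hmapH]; exact hml) hmc
    refine ⟨p, ?_, hp1, hpl, hpc⟩
    intro A
    rw [hpf A]
    congr 1
    funext g
    have hg : Function.surjInv hπ g = g := by
      have := Function.surjInv_eq hπ g
      simpa using this
    rw [hg]
end
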